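/- If a thread T of a stateless program Q can perform a single atomic step from shared heap s with empty local heap to shared heap s' (ending in skip with empty local heap), then the iterated program Q* can move from configuration (s, initial configuration of Q*) to (s', initial configuration of Q*) in finitely many steps. -/
import Mathlib


namespace Paper

/-- Threads of the core language. -/
inductive Thread (C : Type) : Type where
  | prim : C → Thread C
  | skip : Thread C
  | seq : Thread C → Thread C → Thread C
  | choice : Thread C → Thread C → Thread C
  | star : Thread C → Thread C
  | atomic : Thread C → Thread C

/-- Heaps: partial maps from variables and addresses to naturals. -/
abbrev Heap := (String ⊕ ℕ) → Option ℕ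

def emp : Heap := fun _ => none

/-- Memory-cell (address) part of the domain of a heap. -/
def addrDom (h : Heap) : Set ℕ := {a | h (Sum.inr a) ≠ none}

/-- Disjointness on memory cells. -/
def Disj (h₁ h₂ : Heap) : Prop := addrDom h₁ ∩ addrDom h₂ = ∅

abbrev Config (C : Type) := Thread C × Heap

/-- Thread-configuration maps (partial over thread identifiers). -/
abbrev Cf (C : Type) := ℕ → Option (Config C)

/-- A state (s, cf) is separated. -/
def Separated {C : Type} (s : Heap) (cf : Cf C) : Prop :=
  (∀ i c, cf i = some c → Disj s c.2) ∧
  (∀ i j ci cj, i ≠ j → cf i = some ci → cf j = some cj → Disj ci.2 cj.2)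

variable {C : Type}

mutual
  /-- Sequential small-step semantics, parameterized by the semantics `prim`
  of primitive commands (relating shared/owned heaps before and after). -/
  inductive SeqStep (prim : C → Heap → Heap → Heap → Heap → Prop) :
      Heap → Config C → Heap → Config C → Prop where
    | primStep {c s o s' o'} : prim c s o s' o' →
        SeqStep prim s (Thread.prim c, o) s' (Thread.skip, o')
    | seqL {s T₁ o s' T₁' o'} (T₂ : Thread C) :
        SeqStep prim s (T₁, o) s' (T₁', o') →
        SeqStep prim s (Thread.seq T₁ T₂, o) s' (Thread.seq T₁' T₂, o')
    | seqSkip {s o} (T : Thread C) :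
        SeqStep prim s (Thread.seq Thread.skip T, o) s (T, o)
    | choiceL {s T₁ o s' T₁' o'} (T₂ : Thread C) :
        SeqStep prim s (T₁, o) s' (T₁', o') →
        SeqStep prim s (Thread.choice T₁ T₂, o) s' (T₁', o')
    | choiceR {s T₂ o s' T₂' o'} (T₁ : Thread C) :
        SeqStep prim s (T₂, o) s' (T₂', o') →
        SeqStep prim s (Thread.choice T₁ T₂, o) s' (T₂', o')
    | starUnfold {s o} (T : Thread C) :
        SeqStep prim s (Thread.star T, o) s (Thread.seq T (Thread.star T), o)
    | starExit {s o} (T : Thread C) :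
        SeqStep prim s (Thread.star T, o) s (Thread.skip, o)
    | atomic {s T o s' o'} :
        SeqSteps prim s (T, o) s' (Thread.skip, o') →
        SeqStep prim s (Thread.atomic T, o) s' (Thread.skip, o')

  /-- Finitely many sequential steps. -/
  inductive SeqSteps (prim : C → Heap → Heap → Heap → Heap → Prop) :
      Heap → Config C → Heap → Config C → Prop where
    | refl {s c} : SeqSteps prim s c s c
    | step {s c s' c' s'' c''} : SeqStep prim s c s' c' →
        SeqSteps prim s' c' s'' c'' → SeqSteps prim s c s'' c''
end

variable (prim : C → Heap → Heap → Heap → Heap → Prop)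

/-- Parallel (program) step: one thread steps sequentially and the
resulting state must be separated. -/
def ParStep (st st' : Heap × Cf C) : Prop :=
  ∃ i c c', st.2 i = some c ∧ SeqStep prim st.1 c st'.1 c' ∧
    st'.2 = Function.update st.2 i (some c') ∧ Separated st'.1 st'.2

def ParSteps : Heap × Cf C → Heap × Cf C → Prop :=
  Relation.ReflTransGen (ParStep prim)

/-- A program is a parallel composition of finitely many threads. -/
abbrev Program (C : Type) := List (Thread C)

/-- `Q*` : Kleene star applied to every thread. -/
def starP (P : Program C) : Program C := P.map Thread.star

/-- Initial thread configurations: each thread with the empty owned heap. -/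
def cfInit (P : Program C) : Cf C := fun i => (P[i]?).map fun T => (T, emp)

/-- Reachable shared heaps of a program from initial shared heap `sinit`. -/
def Reach (sinit : Heap) (P : Program C) : Set Heap :=
  {s | ∃ cf, ParSteps prim (sinit, cfInit P) (s, cf)}

/-- Effects: single-step shared-heap updates along executions. -/
def Effects (sinit : Heap) (P : Program C) : Set (Heap × Heap) :=
  {p | ∃ cf cf', ParSteps prim (sinit, cfInit P) (p.1, cf) ∧
       ParStep prim (p.1, cf) (p.2, cf')}

/-- Statelessness: every thread of `Q`, from any shared heap reachable by `Q*`
with empty owned heap, steps in one step to `(skip, emp)`. -/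
def Stateless (sinit : Heap) (Q : Program C) : Prop :=
  ∀ T ∈ Q, ∀ s ∈ Reach prim sinit (starP Q), ∀ s' c,
    SeqStep prim s (T, emp) s' c → c = (Thread.skip, emp)

/-- Assumption 1: sequential steps preserve separation. -/
def PreservesSep : Prop :=
  ∀ s c s' c', SeqStep prim s c s' c' → Disj s c.2 → Disj s' c'.2

/-- `Q` is a stateless effect summary of `P`. -/
def IsSummary (sinit : Heap) (P Q : Program C) : Prop :=
  Stateless prim sinit Q ∧
  ∀ T ∈ P, Effects prim sinit (T :: starP Q) ⊆ Effects prim sinit (starP Q)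

/-- Sequential-step successors of a set of views. -/
def post (X : Set (Heap × Config C)) : Set (Heap × Config C) :=
  {v' | ∃ v ∈ X, SeqStep prim v.1 v.2 v'.1 v'.2}

/-- Interference successors: replace the shared heap of a view by the result
of one step of the summary `Q` from its initial configuration, subject to
separation of the resulting view. -/
def env (Q : Program C) (X : Set (Heap × Config C)) : Set (Heap × Config C) :=
  {v' | Disj v'.1 v'.2.2 ∧ ∃ s cf', (s, v'.2) ∈ X ∧
        ParStep prim (s, cfInit Q) (v'.1, cf')}

/-- Initial views. -/
def X₀ (sinit : Heap) (P : Program C) : Set (Heap × Config C) :=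
  {v | v.1 = sinit ∧ ∃ T ∈ P, v.2 = (T, emp)}

/-- The least fixed point of the thread-modular analysis with interference
computed by the candidate summary `Q`. -/
def Fix (sinit : Heap) (P Q : Program C) : Set (Heap × Config C) :=
  ⋂₀ {X | X₀ sinit P ⊆ X ∧ post prim X ⊆ X ∧ env prim Q X ⊆ X}

/-- Shared heaps occurring in the fixed point. -/
def FixHeaps (sinit : Heap) (P Q : Program C) : Set Heap :=
  {s | ∃ c, (s, c) ∈ Fix prim sinit P Q}

lemma disj_emp (h : Heap) : Disj h emp := by
  simp [Disj, addrDom, emp, Set.eq_empty_iff_forall_notMem]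

lemma separated_of_all_emp {C : Type} (s : Heap) (cf : Cf C)
    (h : ∀ i c, cf i = some c → c.2 = emp) : Separated s cf := by
  constructor
  · intro i c hc; rw [h i c hc]; exact disj_emp s
  · intro i j ci cj _ hci hcj; rw [h i ci hci, h j cj hcj]; exact disj_emp emp

/-- a single stateless step of a thread of a stateless program
can be replayed by the starred program, returning to its initial
configurations. -/
theorem stateless_step_iterable
    (sinit : Heap) (Q : Program C) (hQ : Stateless prim sinit Q)
    (T : Thread C) (hT : T ∈ Q) (s s' : Heap)
    (hstep : SeqStep prim s (T, emp) s' (Thread.skip, emp)) :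
    ParSteps prim (s, cfInit (starP Q)) (s', cfInit (starP Q)) := by
  obtain ⟨i, hi, hget⟩ := List.mem_iff_getElem.mp hT
  have hcf0 : cfInit (starP Q) i = some (Thread.star T, emp) := by
    simp [cfInit, starP, List.getElem?_map, List.getElem?_eq_getElem hi, hget]
  set cf0 := cfInit (starP Q) with hcf0def
  set cf1 : Cf C := Function.update cf0 i (some (Thread.seq T (Thread.star T), emp)) with hcf1
  set cf2 : Cf C := Function.update cf1 i (some (Thread.seq Thread.skip (Thread.star T), emp)) with hcf2
  set cf3 : Cf C := Function.update cf2 i (some (Thread.star T, emp)) with hcf3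
  have hemp0 : ∀ j c, cf0 j = some c → c.2 = emp := by
    intro j c hc
    simp only [hcf0def, cfInit, Option.map_eq_some_iff] at hc
    obtain ⟨T', _, rfl⟩ := hc; rfl
  have hemp1 : ∀ j c, cf1 j = some c → c.2 = emp := by
    intro j c hc
    by_cases h : j = i
    · subst h; simp [hcf1] at hc; simp [← hc]
    · rw [hcf1, Function.update_of_ne h] at hc; exact hemp0 j c hc
  have hemp2 : ∀ j c, cf2 j = some c → c.2 = emp := by
    intro j c hc
    by_cases h : j = i
    · subst h; simp [hcf2] at hc; simp [← hc]
    · rw [hcf2, Function.update_of_ne h] at hc; exact hemp1 j c hc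
  have hemp3 : ∀ j c, cf3 j = some c → c.2 = emp := by
    intro j c hc
    by_cases h : j = i
    · subst h; simp [hcf3] at hc; simp [← hc]
    · rw [hcf3, Function.update_of_ne h] at hc; exact hemp2 j c hc
  have hcf3eq : cf3 = cf0 := by
    funext j
    by_cases h : j = i
    · subst h; simp [hcf3, hcf0]
    · simp [hcf3, hcf2, hcf1, Function.update_of_ne h]
  have step1 : ParStep prim (s, cf0) (s, cf1) :=
    ⟨i, _, _, hcf0, SeqStep.starUnfold T, rfl, separated_of_all_emp s cf1 hemp1⟩
  have step2 : ParStep prim (s, cf1) (s', cf2) :=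
    ⟨i, _, _, by simp [hcf1], SeqStep.seqL (Thread.star T) hstep, rfl,
      separated_of_all_emp s' cf2 hemp2⟩
  have step3 : ParStep prim (s', cf2) (s', cf3) :=
    ⟨i, _, _, by simp [hcf2], SeqStep.seqSkip (Thread.star T), rfl,
      separated_of_all_emp s' cf3 hemp3⟩
  have : ParSteps prim (s, cf0) (s', cf3) :=
    Relation.ReflTransGen.head step1 (Relation.ReflTransGen.head step2
      (Relation.ReflTransGen.single step3))
  rwa [hcf3eq] at this

end Paper
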